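/- Let f_n be the number of lattice paths from (0,0) to (n,n) in the lattice where steps (1,0) and (0,1) are allowed everywhere and steps (1,1) are allowed from points weakly above the diagonal y = x (including on the diagonal). Then F(x) = Σ f_n x^n satisfies F(x)·(1 − x·(C(x)+S(x)+1)) = 1 in ℤ[[x]]. -/

import Mathlib

open Finset PowerSeries

/-- Large Schröder numbers. -/
def schroeder : ℕ → ℕ
  | 0 => 1
  | n + 1 => schroeder n + ∑ i : Fin (n + 1), schroeder i * schroeder (n - i)

/-- The points visited by a path (a list of steps) starting at (0,0). -/
def pts (l : List (ℤ × ℤ)) : List (ℤ × ℤ) :=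
  l.scanl (fun p s => (p.1 + s.1, p.2 + s.2)) (0, 0)

/-- The endpoint of a path starting at (0,0). -/
def endPt (l : List (ℤ × ℤ)) : ℤ × ℤ :=
  ((l.map Prod.fst).sum, (l.map Prod.snd).sum)

/-- All steps are unit steps (1,0) or (0,1). -/
def unitSteps (l : List (ℤ × ℤ)) : Prop := ∀ s ∈ l, s = (1, 0) ∨ s = (0, 1)

/-- All steps are (1,0), (0,1) or (1,1). -/
def schSteps (l : List (ℤ × ℤ)) : Prop := ∀ s ∈ l, s = (1, 0) ∨ s = (0, 1) ∨ s = (1, 1)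

/-- The path stays weakly below the diagonal y = x. -/
def weaklyBelow (l : List (ℤ × ℤ)) : Prop := ∀ p ∈ pts l, p.2 ≤ p.1

/-- The path stays strictly below the diagonal except at its start (0,0). -/
def strictBelowAfterStart (l : List (ℤ × ℤ)) : Prop :=
  ∀ p ∈ pts l, p ≠ (0, 0) → p.2 < p.1

/-- Validity of a path starting at point `p` in a lattice where steps (1,0) and (0,1)
are allowed everywhere and the diagonal step (1,1) is allowed exactly from points
satisfying `D`. -/
def okFrom (D : ℤ × ℤ → Prop) : ℤ × ℤ → List (ℤ × ℤ) → Prop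
  | _, [] => True
  | p, s :: l => (s = (1, 0) ∨ s = (0, 1) ∨ (s = (1, 1) ∧ D p)) ∧
      okFrom D (p.1 + s.1, p.2 + s.2) l

/-- Paths from (0,0) to (n,k) in the Catalan–Schröder lattice L_CS:
diagonal steps allowed from points (a,b) with b ≥ a. -/
def LCS (n k : ℕ) : Set (List (ℤ × ℤ)) :=
  {l | okFrom (fun p => p.1 ≤ p.2) (0, 0) l ∧ endPt l = ((n : ℤ), (k : ℤ))}

/-- Paths from (0,0) to (n,k) in the lattice L*_CS:
diagonal steps allowed only from points (a,b) with b > a. -/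
def LCSstar (n k : ℕ) : Set (List (ℤ × ℤ)) :=
  {l | okFrom (fun p => p.1 < p.2) (0, 0) l ∧ endPt l = ((n : ℤ), (k : ℤ))}

/-- Weakly subdiagonal unit-step paths from (0,0) to (n,k). -/
def CPath (n k : ℕ) : Set (List (ℤ × ℤ)) :=
  {l | unitSteps l ∧ endPt l = ((n : ℤ), (k : ℤ)) ∧ weaklyBelow l}

/-- Weakly subdiagonal paths from (0,0) to (n,k) with steps (1,0),(0,1),(1,1). -/
def SPath (n k : ℕ) : Set (List (ℤ × ℤ)) :=
  {l | schSteps l ∧ endPt l = ((n : ℤ), (k : ℤ)) ∧ weaklyBelow l}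

/-- Number of paths from (0,0) to (n,n) in L_CS. -/
noncomputable def fCS (n : ℕ) : ℕ := Nat.card ↥(LCS n n)

/-- Number of paths from (0,0) to (n,n) in L*_CS. -/
noncomputable def fCSstar (n : ℕ) : ℕ := Nat.card ↥(LCSstar n n)

/-- Generating function of the Catalan numbers. -/
noncomputable def catalanGF : PowerSeries ℤ := PowerSeries.mk fun n => (catalan n : ℤ)

/-- Generating function of the large Schröder numbers. -/
noncomputable def schroederGF : PowerSeries ℤ := PowerSeries.mk fun n => (schroeder n : ℤ)

/-- Generating function F(x) of diagonal path counts in L_CS. -/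
noncomputable def FGF : PowerSeries ℤ := PowerSeries.mk fun n => (fCS n : ℤ)

/-- Generating function F*(x) of diagonal path counts in L*_CS. -/
noncomputable def FstarGF : PowerSeries ℤ := PowerSeries.mk fun n => (fCSstar n : ℤ)

/-- Substitution x ↦ x² in a formal power series: g(x²). -/
noncomputable def subSq (g : PowerSeries ℤ) : PowerSeries ℤ :=
  PowerSeries.mk fun n => if 2 ∣ n then PowerSeries.coeff (n / 2) g else 0

/-- Substitution x ↦ x³ in a formal power series: g(x³). -/
noncomputable def subCube (g : PowerSeries ℤ) : PowerSeries ℤ :=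
  PowerSeries.mk fun n => if 3 ∣ n then PowerSeries.coeff (n / 3) g else 0

/-!
Steps are allowed or forbidden according to the height `x - y` of the point they leave from.
A path from the origin to `(n + 1, n + 1)` factors uniquely, at its first return to the diagonal,
into a primitive path to some `(i + 1, i + 1)` and a path to `(j, j)` with `i + j = n`. Because
steps change the height by at most one, a primitive path of `L_CS` is either a diagonal step from
the origin, or an east step, a Dyck path and a north step (diagonal steps are forbidden below the
diagonal), or a north step, a reflected large Schröder path and an east step. Hence
`f (n + 1) = ∑ (c i + s i + [i = 0]) f j`, which is `F = 1 + x (C + S + 1) F` coefficientwise.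
-/

namespace CatalanSchroeder

abbrev Step := ℤ × ℤ

def east : Step := (1, 0)
def north : Step := (0, 1)
def diag : Step := (1, 1)

@[simp] lemma east_fst : east.1 = 1 := rfl
@[simp] lemma east_snd : east.2 = 0 := rfl
@[simp] lemma north_fst : north.1 = 0 := rfl
@[simp] lemma north_snd : north.2 = 1 := rfl
@[simp] lemma diag_fst : diag.1 = 1 := rfl
@[simp] lemma diag_snd : diag.2 = 1 := rfl

def IsStep (s : Step) : Prop := s = east ∨ s = north ∨ s = diag

def height (l : List Step) : ℤ := (endPt l).1 - (endPt l).2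

section Basic

variable {s : Step} {l l' : List Step}

@[simp] lemma endPt_nil : endPt [] = (0, 0) := rfl

@[simp] lemma endPt_cons : endPt (s :: l) = (s.1 + (endPt l).1, s.2 + (endPt l).2) := by
  simp [endPt]

@[simp] lemma endPt_append :
    endPt (l ++ l') = ((endPt l).1 + (endPt l').1, (endPt l).2 + (endPt l').2) := by
  simp [endPt]

@[simp] lemma height_nil : height [] = 0 := rfl

@[simp] lemma height_cons : height (s :: l) = s.1 - s.2 + height l := by
  simp only [height, endPt_cons]; ring

@[simp] lemma height_append : height (l ++ l') = height l + height l' := by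
  simp only [height, endPt_append]; ring

lemma length_le_endPt (hl : ∀ s ∈ l, IsStep s) :
    (l.length : ℤ) ≤ (endPt l).1 + (endPt l).2 := by
  induction l with
  | nil => simp
  | cons s l ih =>
    simp only [List.mem_cons, forall_eq_or_imp] at hl
    have := ih hl.2
    rcases hl.1 with rfl | rfl | rfl <;> simp [east, north, diag] <;> omega

lemma exists_endPt_eq_of_height_eq_zero (hl : ∀ s ∈ l, IsStep s) (h0 : height l = 0) :
    ∃ m : ℕ, endPt l = ((m : ℤ), (m : ℤ)) ∧ l.length ≤ 2 * m := by
  have := length_le_endPt hl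
  simp only [height] at h0
  exact ⟨(endPt l).1.toNat, by ext <;> simp <;> omega, by omega⟩

lemma finite_isStep_length_le (m : ℕ) :
    {l : List Step | (∀ s ∈ l, IsStep s) ∧ l.length ≤ m}.Finite := by
  refine ((List.finite_length_le ({east, north, diag} : Set Step) m).image
    (List.map Subtype.val)).subset ?_
  rintro l ⟨hl, hlen⟩
  lift l to List ({east, north, diag} : Set Step) using hl
  exact ⟨l, by simpa using hlen, rfl⟩

end Basic

def Admissible (rule : Step → ℤ → Prop) : ℤ → List Step → Prop
  | _, [] => True
  | h, s :: l => rule s h ∧ Admissible rule (h + (s.1 - s.2)) l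

/-- The path stays weakly below the diagonal (compare `weaklyBelow`). -/
def HeightsNonneg (l : List Step) : Prop := ∀ u w, l = u ++ w → 0 ≤ height u

def reflect (l : List Step) : List Step := l.map Prod.swap

section Admissible

variable {rule rule' : Step → ℤ → Prop} {h h' : ℤ} {s : Step} {l l' : List Step}

@[simp] lemma admissible_nil : Admissible rule h [] := trivial

@[simp] lemma admissible_cons :
    Admissible rule h (s :: l) ↔ rule s h ∧ Admissible rule (h + (s.1 - s.2)) l := Iff.rfl

@[simp] lemma admissible_append :
    Admissible rule h (l ++ l') ↔ Admissible rule h l ∧ Admissible rule (h + height l) l' := by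
  induction l generalizing h with
  | nil => simp
  | cons s l ih => simp [ih, add_assoc, and_assoc]

lemma admissible_congr
    (H : ∀ u s w, l = u ++ s :: w → (rule s (h + height u) ↔ rule' s (h' + height u))) :
    Admissible rule h l ↔ Admissible rule' h' l := by
  induction l generalizing h h' with
  | nil => simp
  | cons s l ih =>
    have hs := H [] s l rfl
    have hl := ih (h := h + (s.1 - s.2)) (h' := h' + (s.1 - s.2)) fun u t w hu => by
      simpa [add_assoc] using H (s :: u) t w (by simp [hu])
    simp_all

lemma Admissible.isStep (hrule : ∀ s h, rule s h → IsStep s) (hl : Admissible rule h l) :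
    ∀ s ∈ l, IsStep s := by
  induction l generalizing h with
  | nil => simp
  | cons s l ih =>
    simp only [List.mem_cons, forall_eq_or_imp]
    exact ⟨hrule _ _ hl.1, ih hl.2⟩

lemma Admissible.heightsNonneg (hrule : ∀ s h, rule s h → 0 ≤ h → 0 ≤ h + (s.1 - s.2))
    (hl : Admissible rule 0 l) : HeightsNonneg l := by
  suffices ∀ h, 0 ≤ h → Admissible rule h l → ∀ u w, l = u ++ w → 0 ≤ h + height u from
    fun u w hu => by simpa using this 0 le_rfl hl u w hu
  clear hl
  induction l with
  | nil => simp +contextual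
  | cons s l ih =>
    intro h hh hl u w hu
    rcases List.cons_eq_append_iff.1 hu with ⟨rfl, -⟩ | ⟨u', rfl, hu'⟩
    · simpa using hh
    · simpa [add_assoc] using ih _ (hrule s h hl.1 hh) hl.2 u' w hu'

lemma HeightsNonneg.step (hl : HeightsNonneg l) {u w : List Step} (hu : l = u ++ s :: w) :
    0 ≤ height u ∧ 0 ≤ height u + (s.1 - s.2) :=
  ⟨hl u _ hu, by simpa using hl (u ++ [s]) w (by simp [hu])⟩

@[simp] lemma reflect_nil : reflect [] = [] := rfl

@[simp] lemma reflect_cons : reflect (s :: l) = s.swap :: reflect l := rfl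

@[simp] lemma reflect_append : reflect (l ++ l') = reflect l ++ reflect l' := List.map_append

@[simp] lemma reflect_reflect : reflect (reflect l) = l := by simp [reflect]

lemma reflect_injective : Function.Injective reflect :=
  Function.LeftInverse.injective fun _ => reflect_reflect

@[simp] lemma reflect_eq_nil : reflect l = [] ↔ l = [] := List.map_eq_nil_iff

@[simp] lemma endPt_reflect : endPt (reflect l) = (endPt l).swap := by
  induction l with
  | nil => rfl
  | cons s l ih => simp [ih]

@[simp] lemma height_reflect : height (reflect l) = -height l := by
  simp [height]

lemma IsStep.swap (hs : IsStep s) : IsStep s.swap := by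
  rcases hs with rfl | rfl | rfl <;> simp [IsStep, east, north, diag]

@[simp] lemma swap_east : east.swap = north := rfl

@[simp] lemma swap_north : north.swap = east := rfl

lemma isStep_reflect (hl : ∀ s ∈ l, IsStep s) : ∀ s ∈ reflect l, IsStep s := by
  intro s hs
  obtain ⟨t, ht, rfl⟩ := List.mem_map.1 hs
  exact (hl t ht).swap

lemma admissible_reflect :
    Admissible rule h (reflect l) ↔ Admissible (fun s h => rule s.swap (-h)) (-h) l := by
  induction l generalizing h with
  | nil => simp
  | cons s l ih =>
    simp only [reflect_cons, admissible_cons, ih, neg_neg, Prod.fst_swap, Prod.snd_swap]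
    rw [show -(h + (s.2 - s.1)) = -h + (s.1 - s.2) by ring]

end Admissible

def IsPrimitive (l : List Step) : Prop :=
  l ≠ [] ∧ ∀ u w, l = u ++ w → u ≠ [] → w ≠ [] → height u ≠ 0

section Primitive

variable {s : Step} {l A A' B B' R : List Step}

lemma isPrimitive_reflect : IsPrimitive (reflect l) ↔ IsPrimitive l := by
  suffices ∀ l, IsPrimitive l → IsPrimitive (reflect l) from
    ⟨fun h => by simpa using this _ h, this l⟩
  intro l hl
  refine ⟨by simpa using hl.1, fun u w hu hu0 hw0 => ?_⟩
  have := hl.2 (reflect u) (reflect w) (by simpa using congrArg reflect hu) (by simpa)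
    (by simpa)
  simpa using this

lemma IsPrimitive.eq_of_append_eq (hA : IsPrimitive A) (hA' : IsPrimitive A')
    (h0 : height A = 0) (h0' : height A' = 0) (h : A ++ B = A' ++ B') : A = A' := by
  rcases List.append_eq_append_iff.1 h with ⟨C, rfl, -⟩ | ⟨C, rfl, -⟩
  · by_contra hne
    exact hA'.2 A C rfl hA.1 (by rintro rfl; simp at hne) h0
  · by_contra hne
    exact hA.2 A' C rfl hA'.1 (by rintro rfl; simp at hne) h0'

lemma exists_isPrimitive_append (hl : l ≠ []) (h0 : height l = 0) :
    ∃ A B, l = A ++ B ∧ IsPrimitive A ∧ height A = 0 := by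
  induction hn : l.length using Nat.strong_induction_on generalizing l with
  | _ n ih =>
  by_cases hP : IsPrimitive l
  · exact ⟨l, [], by simp, hP, h0⟩
  · obtain ⟨u, w, rfl, hu, hw, hu0⟩ : ∃ u w, l = u ++ w ∧ u ≠ [] ∧ w ≠ [] ∧ height u = 0 := by
      simpa [IsPrimitive, hl] using hP
    obtain ⟨A, B, rfl, hA, hA0⟩ :=
      ih _ (by simp [← hn, List.length_pos_iff.2 hw]) hu hu0 rfl
    exact ⟨A, B ++ w, by simp, hA, hA0⟩

lemma isPrimitive_east_north (hA : HeightsNonneg A) : IsPrimitive (east :: A ++ [north]) := by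
  refine ⟨by simp, fun u w hu hu0 hw0 => ?_⟩
  obtain ⟨u', rfl, hu'⟩ : ∃ u', u = east :: u' ∧ A ++ [north] = u' ++ w := by
    simpa [hu0] using List.cons_eq_append_iff.1 hu
  have : 0 ≤ height u' := by
    rcases List.append_eq_append_iff.1 hu' with ⟨C, rfl, hC⟩ | ⟨C, rfl, -⟩
    · obtain rfl : C = [] := by
        have := List.append_eq_singleton_iff.1 hC.symm
        simp only [hw0, and_false, or_false] at this
        exact this.1
      simpa using hA A [] (by simp)
    · exact hA u' C rfl
  simp [east]
  omega

/-- Steps lower the height by at most one, so the height cannot jump over `0`. -/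
lemma IsPrimitive.height_pos (hP : IsPrimitive (east :: R)) (hR : ∀ s ∈ R, IsStep s) :
    ∀ u w, east :: R = u ++ w → u ≠ [] → w ≠ [] → 0 < height u := by
  intro u
  induction u using List.reverseRecOn with
  | nil => simp
  | append_singleton v t ih =>
    intro w hvw _ hw
    rcases eq_or_ne v [] with rfl | hv
    · obtain rfl : t = east := by simpa using (List.cons_eq_cons.1 hvw).1.symm
      simp [east]
    have hvpos := ih (t :: w) (by simpa using hvw) hv (by simp)
    have ht : IsStep t := by
      have : t ∈ east :: R := by simp [hvw]
      exact (List.mem_cons.1 this).elim (fun h => Or.inl h) (hR t)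
    have hne := hP.2 (v ++ [t]) w hvw (by simp) hw
    rcases ht with rfl | rfl | rfl <;> simp_all [east, north, diag] <;> omega

lemma IsPrimitive.eq_east_north (hP : IsPrimitive (east :: R)) (hR : ∀ s ∈ R, IsStep s)
    (h0 : height (east :: R) = 0) : ∃ A, HeightsNonneg A ∧ R = A ++ [north] := by
  obtain rfl | ⟨A, t, rfl⟩ := R.eq_nil_or_concat'
  · simp [east] at h0
  have hpos := hP.height_pos hR
  have hA := hpos (east :: A) [t] (by simp) (by simp) (by simp)
  have ht : IsStep t := hR t (by simp)
  refine ⟨A, fun u w hu => ?_, ?_⟩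
  · have := hpos (east :: u) (w ++ [t]) (by simp [hu]) (by simp) (by simp)
    simp [east] at this
    omega
  · have h0' : height A + (t.1 - t.2) = -1 := by simp [east] at h0; omega
    have hA' : 0 ≤ height A := by simp [east] at hA; omega
    rcases ht with rfl | rfl | rfl
    · simp [east] at h0'; omega
    · rfl
    · simp [diag] at h0'; omega

lemma IsPrimitive.eq_diag_or_east_or_north (hP : IsPrimitive l) (hl : ∀ s ∈ l, IsStep s)
    (h0 : height l = 0) :
    l = [diag] ∨ (∃ A, HeightsNonneg A ∧ l = east :: A ++ [north]) ∨
      ∃ B, HeightsNonneg B ∧ l = north :: reflect B ++ [east] := by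
  obtain ⟨s, R, rfl⟩ := List.exists_cons_of_ne_nil hP.1
  simp only [List.mem_cons, forall_eq_or_imp] at hl
  rcases hl.1 with rfl | rfl | rfl
  · obtain ⟨A, hA, rfl⟩ := hP.eq_east_north hl.2 h0
    exact Or.inr (Or.inl ⟨A, hA, rfl⟩)
  · have hP' : IsPrimitive (east :: reflect R) := by simpa using isPrimitive_reflect.2 hP
    obtain ⟨B, hB, hRB⟩ := hP'.eq_east_north (isStep_reflect hl.2) <| by
      simp only [height_cons, height_reflect] at h0 ⊢
      simp only [east, north] at h0 ⊢
      omega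
    refine Or.inr (Or.inr ⟨B, hB, ?_⟩)
    simpa using congrArg reflect hRB
  · refine Or.inl ?_
    by_contra hR
    exact hP.2 [diag] R rfl (by simp) (by simpa using hR) (by simp [diag])

end Primitive

def paths (rule : Step → ℤ → Prop) (n : ℕ) : Set (List Step) :=
  {l | Admissible rule 0 l ∧ endPt l = ((n : ℤ), (n : ℤ))}

def primPaths (rule : Step → ℤ → Prop) (n : ℕ) : Set (List Step) :=
  {l ∈ paths rule n | IsPrimitive l}

section FirstReturn

variable {rule : Step → ℤ → Prop} {l A B : List Step} {n : ℕ}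

lemma height_eq_zero_of_mem_paths (hl : l ∈ paths rule n) : height l = 0 := by
  simp [height, hl.2]

lemma paths_finite (hrule : ∀ s h, rule s h → IsStep s) (n : ℕ) : (paths rule n).Finite := by
  refine (finite_isStep_length_le (2 * n)).subset fun l hl => ?_
  have hs := hl.1.isStep hrule
  have := length_le_endPt hs
  rw [hl.2] at this
  exact ⟨hs, by push_cast at this; omega⟩

lemma paths_zero (hrule : ∀ s h, rule s h → IsStep s) : paths rule 0 = {[]} := by
  ext l
  refine ⟨fun hl => ?_, by rintro rfl; simp [paths]⟩
  have := length_le_endPt (hl.1.isStep hrule)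
  rw [hl.2] at this
  simpa using this

lemma append_mem_paths {i j : ℕ} (hA : A ∈ paths rule i) (hB : B ∈ paths rule j) :
    A ++ B ∈ paths rule (i + j) :=
  ⟨admissible_append.2 ⟨hA.1, by simpa [height_eq_zero_of_mem_paths hA] using hB.1⟩,
    by simp [hA.2, hB.2]⟩

lemma exists_primPaths_append (hrule : ∀ s h, rule s h → IsStep s)
    (hl : l ∈ paths rule (n + 1)) :
    ∃ i j, i + j = n ∧ ∃ A ∈ primPaths rule (i + 1), ∃ B ∈ paths rule j, l = A ++ B := by
  have hne : l ≠ [] := by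
    rintro rfl
    have := congrArg Prod.fst hl.2
    simp at this
    omega
  obtain ⟨A, B, rfl, hA, hA0⟩ := exists_isPrimitive_append hne (height_eq_zero_of_mem_paths hl)
  have hadm : Admissible rule 0 A ∧ Admissible rule 0 B := by
    simpa [hA0] using admissible_append.1 hl.1
  have hB0 : height B = 0 := by simpa [hA0] using height_eq_zero_of_mem_paths hl
  obtain ⟨a, ha, hlenA⟩ := exists_endPt_eq_of_height_eq_zero (hadm.1.isStep hrule) hA0
  obtain ⟨b, hb, -⟩ := exists_endPt_eq_of_height_eq_zero (hadm.2.isStep hrule) hB0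
  obtain ⟨i, rfl⟩ : ∃ i, a = i + 1 := ⟨a - 1, by have := List.length_pos_iff.2 hA.1; omega⟩
  have hsum := congrArg Prod.fst hl.2
  simp only [endPt_append, ha, hb] at hsum
  exact ⟨i, b, by omega, A, ⟨⟨hadm.1, ha⟩, hA⟩, B, ⟨hadm.2, hb⟩, rfl⟩

theorem card_paths_succ (hrule : ∀ s h, rule s h → IsStep s) (n : ℕ) :
    Nat.card (paths rule (n + 1)) =
      ∑ ij ∈ antidiagonal n, Nat.card (primPaths rule (ij.1 + 1)) * Nat.card (paths rule ij.2) := by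
  let f : (Σ ij : antidiagonal n, primPaths rule (ij.1.1 + 1) × paths rule ij.1.2) →
      paths rule (n + 1) := fun x =>
    ⟨x.2.1.1 ++ x.2.2.1, by
      simpa [add_right_comm, HasAntidiagonal.mem_antidiagonal.1 x.1.2] using
        append_mem_paths x.2.1.2.1 x.2.2.2⟩
  have hf : Function.Bijective f := by
    refine ⟨?_, fun ⟨l, hl⟩ => ?_⟩
    · rintro ⟨⟨⟨i, j⟩, hij⟩, ⟨A, hA⟩, ⟨B, hB⟩⟩ ⟨⟨⟨i', j'⟩, hij'⟩, ⟨A', hA'⟩, ⟨B', hB'⟩⟩ h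
      have hAB : A ++ B = A' ++ B' := congrArg Subtype.val h
      obtain rfl := hA.2.eq_of_append_eq hA'.2 (height_eq_zero_of_mem_paths hA.1)
        (height_eq_zero_of_mem_paths hA'.1) hAB
      obtain rfl : i = i' := by simpa using congrArg Prod.fst (hA.1.2.symm.trans hA'.1.2)
      obtain rfl : j = j' := by simp only [HasAntidiagonal.mem_antidiagonal] at hij hij'; omega
      obtain rfl := List.append_cancel_left hAB
      rfl
    · obtain ⟨i, j, hij, A, hA, B, hB, rfl⟩ := exists_primPaths_append hrule hl
      exact ⟨⟨⟨(i, j), HasAntidiagonal.mem_antidiagonal.2 hij⟩, ⟨A, hA⟩, ⟨B, hB⟩⟩, rfl⟩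
  have := fun m => (paths_finite hrule m).to_subtype
  have := fun m => ((paths_finite hrule m).subset fun _ hl => hl.1 : (primPaths rule m).Finite)
    |>.to_subtype
  rw [← Nat.card_eq_of_bijective f hf, Nat.card_sigma, ← Finset.sum_coe_sort (antidiagonal n)]
  simp only [Nat.card_prod]

end FirstReturn

def eastPart (rule : Step → ℤ → Prop) (k : ℕ) : Set (List Step) :=
  {A | Admissible rule 0 (east :: A ++ [north]) ∧ endPt A = ((k : ℤ), (k : ℤ)) ∧ HeightsNonneg A}

/-- `B` is stored reflected, so that it lies weakly below the diagonal. -/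
def northPart (rule : Step → ℤ → Prop) (k : ℕ) : Set (List Step) :=
  {B | Admissible rule 0 (north :: reflect B ++ [east]) ∧ endPt B = ((k : ℤ), (k : ℤ)) ∧
    HeightsNonneg B}

def diagPart (rule : Step → ℤ → Prop) (k : ℕ) : Set (List Step) :=
  {l | l = [diag] ∧ k = 0 ∧ rule diag 0}

section PrimitiveParts

variable {rule : Step → ℤ → Prop} {k : ℕ}

lemma east_north_mem_primPaths {A : List Step} (hA : A ∈ eastPart rule k) :
    east :: A ++ [north] ∈ primPaths rule (k + 1) :=
  ⟨⟨hA.1, by simp [hA.2.1, east, north, add_comm]⟩, isPrimitive_east_north hA.2.2⟩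

lemma north_east_mem_primPaths {B : List Step} (hB : B ∈ northPart rule k) :
    north :: reflect B ++ [east] ∈ primPaths rule (k + 1) :=
  ⟨⟨hB.1, by simp [hB.2.1, east, north, add_comm]⟩,
    by simpa using isPrimitive_reflect.2 (isPrimitive_east_north hB.2.2)⟩

lemma mem_primPaths_of_mem_diagPart {l : List Step} (hl : l ∈ diagPart rule k) :
    l ∈ primPaths rule (k + 1) := by
  obtain ⟨rfl, rfl, hd⟩ := hl
  refine ⟨⟨⟨hd, trivial⟩, by simp [diag]⟩, by simp, fun u w huw hu hw => ?_⟩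
  exact ((List.append_eq_singleton_iff.1 huw.symm).elim (hu ·.1) (hw ·.2)).elim

theorem card_primPaths_succ (hrule : ∀ s h, rule s h → IsStep s) (k : ℕ) :
    Nat.card (primPaths rule (k + 1)) =
      Nat.card (eastPart rule k) + Nat.card (northPart rule k) + Nat.card (diagPart rule k) := by
  let f : eastPart rule k ⊕ northPart rule k ⊕ diagPart rule k → primPaths rule (k + 1) :=
    Sum.elim (fun A => ⟨_, east_north_mem_primPaths A.2⟩)
      (Sum.elim (fun B => ⟨_, north_east_mem_primPaths B.2⟩)
        (fun l => ⟨_, mem_primPaths_of_mem_diagPart l.2⟩))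
  have hf : Function.Bijective f := by
    refine ⟨?_, fun ⟨P, hP⟩ => ?_⟩
    · refine Function.Injective.of_comp (f := Subtype.val) ?_
      rintro (⟨A, _⟩ | ⟨B, _⟩ | ⟨l, rfl, _⟩) (⟨A', _⟩ | ⟨B', _⟩ | ⟨l', rfl, _⟩) h <;>
        simp_all [f, east, north, diag, reflect_injective.eq_iff]
    · have hs := hP.1.1.isStep hrule
      rcases hP.2.eq_diag_or_east_or_north hs (height_eq_zero_of_mem_paths hP.1) with
        rfl | ⟨A, hA, rfl⟩ | ⟨B, hB, rfl⟩
      · have hk := congrArg Prod.fst hP.1.2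
        simp [diag] at hk
        exact ⟨.inr (.inr ⟨_, rfl, by omega, hP.1.1.1⟩), rfl⟩
      · have hend := hP.1.2
        simp [east, north, Prod.ext_iff] at hend
        exact ⟨.inl ⟨A, hP.1.1, by ext <;> simp <;> omega, hA⟩, rfl⟩
      · have hend := hP.1.2
        simp [east, north, Prod.ext_iff] at hend
        exact ⟨.inr (.inl ⟨B, hP.1.1, by ext <;> simp <;> omega, hB⟩), rfl⟩
  have : Finite (primPaths rule (k + 1)) :=
    ((paths_finite hrule _).subset fun _ hl => hl.1).to_subtype
  have := Finite.of_injective f hf.1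
  have : Finite (eastPart rule k) := .sum_left (northPart rule k ⊕ diagPart rule k)
  have : Finite (northPart rule k ⊕ diagPart rule k) := .sum_right (eastPart rule k)
  have : Finite (northPart rule k) := .sum_left (diagPart rule k)
  have : Finite (diagPart rule k) := .sum_right (northPart rule k)
  rw [← Nat.card_eq_of_bijective f hf, Nat.card_sum, Nat.card_sum, add_assoc]

end PrimitiveParts

section PartsAsPaths

variable {rule rule' : Step → ℤ → Prop} {k : ℕ}

lemma admissible_one_iff {l : List Step} (hl : HeightsNonneg l)
    (H : ∀ s h, 0 ≤ h → 0 ≤ h + (s.1 - s.2) → (rule s (1 + h) ↔ rule' s h)) :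
    Admissible rule 1 l ↔ Admissible rule' 0 l :=
  admissible_congr fun _ s _ hu => by
    obtain ⟨h1, h2⟩ := hl.step hu
    simpa using H s _ h1 h2

lemma eastPart_eq_paths (heast : rule east 0) (hnorth : rule north 1)
    (hrule' : ∀ s h, rule' s h → 0 ≤ h → 0 ≤ h + (s.1 - s.2))
    (H : ∀ s h, 0 ≤ h → 0 ≤ h + (s.1 - s.2) → (rule s (1 + h) ↔ rule' s h)) :
    eastPart rule k = paths rule' k := by
  ext A
  have hadm : ∀ hA : HeightsNonneg A, endPt A = ((k : ℤ), (k : ℤ)) →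
      (Admissible rule 0 (east :: A ++ [north]) ↔ Admissible rule' 0 A) := fun hA hend => by
    simp [height, hend, heast, hnorth, admissible_one_iff hA H]
  exact ⟨fun ⟨h, hend, hA⟩ => ⟨(hadm hA hend).1 h, hend⟩,
    fun ⟨h, hend⟩ => ⟨(hadm (h.heightsNonneg hrule') hend).2 h, hend, h.heightsNonneg hrule'⟩⟩

lemma northPart_eq_paths (hnorth : rule north 0) (heast : rule east (-1))
    (hrule' : ∀ s h, rule' s h → 0 ≤ h → 0 ≤ h + (s.1 - s.2))
    (H : ∀ s h, 0 ≤ h → 0 ≤ h + (s.1 - s.2) → (rule s.swap (-(1 + h)) ↔ rule' s h)) :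
    northPart rule k = paths rule' k := by
  ext B
  have hadm : ∀ hB : HeightsNonneg B, endPt B = ((k : ℤ), (k : ℤ)) →
      (Admissible rule 0 (north :: reflect B ++ [east]) ↔ Admissible rule' 0 B) := fun hB hend => by
    simp [height, hend, heast, hnorth, admissible_reflect,
      admissible_one_iff (rule := fun s h => rule s.swap (-h)) hB H]
  exact ⟨fun ⟨h, hend, hB⟩ => ⟨(hadm hB hend).1 h, hend⟩,
    fun ⟨h, hend⟩ => ⟨(hadm (h.heightsNonneg hrule') hend).2 h, hend, h.heightsNonneg hrule'⟩⟩

lemma card_diagPart (hdiag : rule diag 0) :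
    Nat.card (diagPart rule k) = if k = 0 then 1 else 0 := by
  split_ifs with hk
  · simp [diagPart, hk, hdiag]
  · simp [diagPart, hk]

end PartsAsPaths

/-- Dyck paths: unit steps, weakly below the diagonal. -/
def dyckRule (s : Step) (h : ℤ) : Prop := s = east ∨ (s = north ∧ 0 < h)

/-- Large Schröder paths: Dyck paths that may also take diagonal steps. -/
def schroederRule (s : Step) (h : ℤ) : Prop := s = east ∨ (s = north ∧ 0 < h) ∨ s = diag

/-- The lattice `L_CS`. -/
def csRule (s : Step) (h : ℤ) : Prop := s = east ∨ s = north ∨ (s = diag ∧ h ≤ 0)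

lemma dyckRule_isStep (s : Step) (h : ℤ) (hs : dyckRule s h) : IsStep s := by
  rcases hs with hs | ⟨hs, -⟩ <;> simp [IsStep, hs]

lemma schroederRule_isStep (s : Step) (h : ℤ) (hs : schroederRule s h) : IsStep s := by
  rcases hs with hs | ⟨hs, -⟩ | hs <;> simp [IsStep, hs]

lemma csRule_isStep (s : Step) (h : ℤ) (hs : csRule s h) : IsStep s := by
  rcases hs with hs | hs | ⟨hs, -⟩ <;> simp [IsStep, hs]

lemma dyckRule_nonneg_add (s : Step) (h : ℤ) (hs : dyckRule s h) (hh : 0 ≤ h) :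
    0 ≤ h + (s.1 - s.2) := by
  rcases hs with rfl | ⟨rfl, hh⟩ <;> simp <;> omega

lemma schroederRule_nonneg_add (s : Step) (h : ℤ) (hs : schroederRule s h) (hh : 0 ≤ h) :
    0 ≤ h + (s.1 - s.2) := by
  rcases hs with rfl | ⟨rfl, hh⟩ | rfl <;> simp <;> omega

lemma eastPart_dyckRule (k : ℕ) : eastPart dyckRule k = paths dyckRule k :=
  eastPart_eq_paths (by simp [dyckRule]) (by simp [dyckRule]) dyckRule_nonneg_add fun s h _ _ => by
    simp only [dyckRule, Prod.ext_iff, east_fst, east_snd, north_fst, north_snd]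
    omega

lemma northPart_dyckRule (k : ℕ) : northPart dyckRule k = ∅ :=
  Set.eq_empty_of_forall_notMem fun _ hB => by simpa [dyckRule, east, north] using hB.1.1

lemma diagPart_dyckRule (k : ℕ) : diagPart dyckRule k = ∅ :=
  Set.eq_empty_of_forall_notMem fun _ hl => by simpa [dyckRule, east, north, diag] using hl.2.2

lemma eastPart_schroederRule (k : ℕ) : eastPart schroederRule k = paths schroederRule k :=
  eastPart_eq_paths (by simp [schroederRule]) (by simp [schroederRule]) schroederRule_nonneg_add
    fun s h _ _ => by
      simp only [schroederRule, Prod.ext_iff, east_fst, east_snd, north_fst, north_snd, diag_fst,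
        diag_snd]
      omega

lemma northPart_schroederRule (k : ℕ) : northPart schroederRule k = ∅ :=
  Set.eq_empty_of_forall_notMem fun _ hB => by simpa [schroederRule, east, north, diag] using hB.1.1

lemma eastPart_csRule (k : ℕ) : eastPart csRule k = paths dyckRule k :=
  eastPart_eq_paths (by simp [csRule]) (by simp [csRule]) dyckRule_nonneg_add fun s h _ _ => by
    simp only [csRule, dyckRule, Prod.ext_iff, east_fst, east_snd, north_fst, north_snd, diag_fst,
      diag_snd]
    omega

lemma northPart_csRule (k : ℕ) : northPart csRule k = paths schroederRule k :=
  northPart_eq_paths (by simp [csRule]) (by simp [csRule]) schroederRule_nonneg_add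
    fun s h _ _ => by
      simp only [csRule, schroederRule, Prod.ext_iff, Prod.fst_swap, Prod.snd_swap, east_fst,
        east_snd, north_fst, north_snd, diag_fst, diag_snd]
      omega

lemma schroeder_succ' (n : ℕ) :
    schroeder (n + 1) = schroeder n + ∑ ij ∈ antidiagonal n, schroeder ij.1 * schroeder ij.2 := by
  rw [schroeder, Nat.sum_antidiagonal_eq_sum_range_succ (fun i j => schroeder i * schroeder j),
    sum_range]

lemma card_paths_zero {rule : Step → ℤ → Prop} (hrule : ∀ s h, rule s h → IsStep s) :
    Nat.card (paths rule 0) = 1 := by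
  simp [paths_zero hrule]

theorem card_paths_dyckRule (n : ℕ) : Nat.card (paths dyckRule n) = catalan n := by
  induction n using Nat.strong_induction_on with
  | _ n ih =>
  rcases n with _ | n
  · simp [card_paths_zero dyckRule_isStep]
  rw [card_paths_succ dyckRule_isStep, catalan_succ']
  refine sum_congr rfl fun ij hij => ?_
  have := HasAntidiagonal.mem_antidiagonal.1 hij
  rw [card_primPaths_succ dyckRule_isStep, eastPart_dyckRule, northPart_dyckRule,
    diagPart_dyckRule, ih _ (by omega), ih _ (by omega)]
  simp

theorem card_paths_schroederRule (n : ℕ) : Nat.card (paths schroederRule n) = schroeder n := by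
  induction n using Nat.strong_induction_on with
  | _ n ih =>
  rcases n with _ | n
  · simp [card_paths_zero schroederRule_isStep, schroeder]
  rw [card_paths_succ schroederRule_isStep, schroeder_succ']
  have hterm : ∀ ij ∈ antidiagonal n,
      Nat.card (primPaths schroederRule (ij.1 + 1)) * Nat.card (paths schroederRule ij.2) =
        schroeder ij.1 * schroeder ij.2 + if ij.1 = 0 then schroeder ij.2 else 0 := by
    intro ij hij
    have := HasAntidiagonal.mem_antidiagonal.1 hij
    rw [card_primPaths_succ schroederRule_isStep, eastPart_schroederRule,
      northPart_schroederRule, card_diagPart (Or.inr (Or.inr rfl)), ih _ (by omega),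
      ih _ (by omega)]
    split_ifs <;> simp [add_mul]
  have hdiag : ∑ ij ∈ antidiagonal n, (if ij.1 = 0 then schroeder ij.2 else 0) = schroeder n := by
    rw [sum_eq_single (0, n) (fun ij hij hne => if_neg fun h0 => hne ?_) (by simp)]
    · simp
    · have := HasAntidiagonal.mem_antidiagonal.1 hij
      ext <;> simp <;> omega
  rw [sum_congr rfl hterm, sum_add_distrib, hdiag, add_comm]

theorem card_paths_csRule_succ (n : ℕ) :
    Nat.card (paths csRule (n + 1)) =
      ∑ ij ∈ antidiagonal n,
        (catalan ij.1 + schroeder ij.1 + if ij.1 = 0 then 1 else 0) *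
          Nat.card (paths csRule ij.2) := by
  rw [card_paths_succ csRule_isStep]
  refine sum_congr rfl fun ij _ => ?_
  rw [card_primPaths_succ csRule_isStep, eastPart_csRule, northPart_csRule,
    card_diagPart (Or.inr (Or.inr ⟨rfl, le_rfl⟩)), card_paths_dyckRule, card_paths_schroederRule]

lemma okFrom_iff_admissible (p : ℤ × ℤ) (l : List Step) :
    okFrom (fun q => q.1 ≤ q.2) p l ↔ Admissible csRule (p.1 - p.2) l := by
  induction l generalizing p with
  | nil => simp [okFrom]
  | cons s l ih =>
    simp only [okFrom, admissible_cons, ih, csRule, east, north, diag, sub_nonpos]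
    rw [show p.1 + s.1 - (p.2 + s.2) = p.1 - p.2 + (s.1 - s.2) by ring]

lemma LCS_eq_paths (n : ℕ) : LCS n n = paths csRule n := by
  ext l
  simp [LCS, paths, okFrom_iff_admissible]

lemma fCS_eq_card (n : ℕ) : fCS n = Nat.card (paths csRule n) := by
  rw [fCS, LCS_eq_paths]

theorem mul_one_sub_X_mul_eq_one {R : Type*} [CommRing R] {F G : PowerSeries R}
    (h0 : coeff 0 F = 1) (hsucc : ∀ n, coeff (n + 1) F = coeff n (G * F)) :
    F * (1 - X * G) = 1 := by
  rw [show F * (1 - X * G) = F - X * (G * F) by ring]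
  ext (_ | n)
  · simpa using h0
  · simp [hsucc]

end CatalanSchroeder

open CatalanSchroeder in
/-- F(x)·(1 − x·(C(x)+S(x)+1)) = 1 in ℤ[[x]]. -/
theorem F_gf :
    FGF * (1 - PowerSeries.X * (catalanGF + schroederGF + 1)) = 1 := by
  refine mul_one_sub_X_mul_eq_one ?_ fun n => ?_
  · simp only [FGF, coeff_mk, fCS_eq_card, card_paths_zero csRule_isStep, Nat.cast_one]
  · simp only [FGF, coeff_mk, fCS_eq_card, card_paths_csRule_succ, coeff_mul]
    push_cast
    refine sum_congr rfl fun ij _ => ?_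
    simp [catalanGF, schroederGF, coeff_one]
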